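/- Let (G,𝒫) and (H,𝒬) be group pairs and suppose there is a quasi-isometry of group pairs q : (G,𝒫) → (H,𝒬). Then 𝒫 has finite height in G if and only if 𝒬 has finite height in H, and 𝒫 has finite width in G if and only if 𝒬 has finite width in H. -/

import Mathlib

open scoped Pointwise ENNReal NNReal

namespace CIC

variable {G : Type*} [Group G] {H : Type*} [Group H]

/-- Word length of `g` with respect to the generating set `S`: the least `n` such that `g`
is a product of `n` elements of `S ∪ S⁻¹`. -/
noncomputable def wordLength (S : Set G) (g : G) : ℕ :=
  sInf {n | ∃ l : List G, (∀ x ∈ l, x ∈ S ∨ x⁻¹ ∈ S) ∧ l.length = n ∧ l.prod = g}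

/-- The word metric on `G` associated to the generating set `S`. -/
noncomputable def wdist (S : Set G) (g h : G) : ℕ := wordLength S (g⁻¹ * h)

/-- Closed `r`-neighborhood of `A` with respect to the word metric of `S`. -/
def nbhd (S : Set G) (r : ℝ) (A : Set G) : Set G :=
  {x | ∃ a ∈ A, (wdist S a x : ℝ) ≤ r}

/-- Hausdorff distance between subsets of `G`, valued in `[0,∞]`: the infimum of those
`r ≥ 0` such that each set is contained in the closed `r`-neighborhood of the other,
the infimum of the empty set being `∞`. -/
noncomputable def hdist (S : Set G) (A B : Set G) : ℝ≥0∞ :=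
  ⨅ (r : ℝ≥0) (_ : A ⊆ nbhd S (r : ℝ) B ∧ B ⊆ nbhd S (r : ℝ) A), (r : ℝ≥0∞)

/-- The conjugate subgroup `g P g⁻¹`. -/
def conj (g : G) (P : Subgroup G) : Subgroup G := P.map (MulAut.conj g).toMonoidHom

/-- The set `G/𝒫` of all left cosets `gP` with `g ∈ G` and `P ∈ 𝒫`. -/
def cosets (Ps : Finset (Subgroup G)) : Set (Set G) :=
  {A | ∃ (g : G) (P : Subgroup G), P ∈ Ps ∧ A = g • (P : Set G)}

/-- A group pair `(G, 𝒫)`: `S` is a finite generating set of `G` and `𝒫` is a finite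
collection of infinite subgroups of `G`. -/
structure IsGroupPair (S : Finset G) (Ps : Finset (Subgroup G)) : Prop where
  generates : Subgroup.closure (S : Set G) = ⊤
  infinite : ∀ P ∈ Ps, (P : Set G).Infinite

/-- An `(L,C,M)`-quasi-isometry of group pairs `q : (G,𝒫) → (H,𝒬)`. -/
structure IsPairQI (S : Finset G) (T : Finset H)
    (Ps : Finset (Subgroup G)) (Qs : Finset (Subgroup H))
    (L C M : ℝ≥0) (q : G → H) : Prop where
  one_le : 1 ≤ L
  lower : ∀ a b : G, (wdist (S : Set G) a b : ℝ) / L - C ≤ (wdist (T : Set H) (q a) (q b) : ℝ)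
  upper : ∀ a b : G, (wdist (T : Set H) (q a) (q b) : ℝ) ≤ L * (wdist (S : Set G) a b : ℝ) + C
  dense : ∀ y : H, ∃ x : G, (wdist (T : Set H) (q x) y : ℝ) ≤ C
  coset_fwd : ∀ A ∈ cosets Ps, ∃ B ∈ cosets Qs, hdist (T : Set H) (q '' A) B < (M : ℝ≥0∞)
  coset_bwd : ∀ B ∈ cosets Qs, ∃ A ∈ cosets Ps, hdist (T : Set H) (q '' A) B < (M : ℝ≥0∞)

/-- `𝒫` has finite height in `G`: there is a bound on the number of distinct cosets
`g₁P₁, …, g_mP_m ∈ G/𝒫` such that `⋂ᵢ gᵢPᵢgᵢ⁻¹` is infinite.  (For a left coset `A = gP`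
the subgroup `gPg⁻¹` is exactly the stabilizer of `A` under the left multiplication action
of `G` on subsets.) -/
def HasFiniteHeight (Ps : Finset (Subgroup G)) : Prop :=
  ∃ n : ℕ, ∀ F : Finset (Set G), ↑F ⊆ cosets Ps →
    ((⨅ A ∈ F, MulAction.stabilizer G A : Subgroup G) : Set G).Infinite → F.card ≤ n

/-- `𝒫` has finite width in `G`: there is a bound on the number of distinct cosets
`g₁P₁, …, g_mP_m ∈ G/𝒫` whose associated conjugates `gᵢPᵢgᵢ⁻¹` pairwise intersect in
infinite subgroups. -/
def HasFiniteWidth (Ps : Finset (Subgroup G)) : Prop :=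
  ∃ n : ℕ, ∀ F : Finset (Set G), ↑F ⊆ cosets Ps →
    (∀ A ∈ F, ∀ B ∈ F, A ≠ B →
      ((MulAction.stabilizer G A ⊓ MulAction.stabilizer G B : Subgroup G) : Set G).Infinite) →
    F.card ≤ n

/-!
For finitely many cosets `A₁, …, Aₘ ∈ G/𝒫`, the subgroup `⋂ Stab(Aᵢ)` is infinite iff for some `r`
the `r`-neighbourhoods of the `Aᵢ` have infinite intersection. Indeed, a point `x` of that
intersection is `aᵢ uᵢ` with `aᵢ ∈ Aᵢ` and `uᵢ` in the finite `r`-ball, so infinitely many such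
points share the same tuple `(uᵢ)`, and for two of them `x y⁻¹ = aᵢ bᵢ⁻¹` stabilizes every `Aᵢ`.

A quasi-isometry of pairs moves cosets to cosets at bounded Hausdorff distance, so in either
direction it preserves infinite coarse intersections. It also identifies at most `K` cosets with a
single one: cosets close to a common coset all meet a fixed ball, and a ball of radius `D` meets at
most `|B_D| · |𝒫|` cosets. Bounds on height and width therefore transfer, multiplied by `K`.
-/

section WordMetric

variable {S : Set G}

lemma wordLength_prod_le {l : List G} (hl : ∀ x ∈ l, x ∈ S ∨ x⁻¹ ∈ S) :
    wordLength S l.prod ≤ l.length :=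
  Nat.sInf_le ⟨l, hl, rfl, rfl⟩

lemma exists_list_length_eq_wordLength (hS : Subgroup.closure S = ⊤) (g : G) :
    ∃ l : List G, (∀ x ∈ l, x ∈ S ∨ x⁻¹ ∈ S) ∧ l.length = wordLength S g ∧ l.prod = g := by
  have hg : g ∈ Submonoid.closure (S ∪ S⁻¹) := by
    rw [← Subgroup.closure_toSubmonoid, hS]; trivial
  obtain ⟨l, hl, hlg⟩ := Submonoid.exists_list_of_mem_closure hg
  exact Nat.sInf_mem (s := {n | ∃ l : List G, (∀ x ∈ l, x ∈ S ∨ x⁻¹ ∈ S) ∧ l.length = n ∧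
    l.prod = g}) ⟨l.length, l, hl, rfl, hlg⟩

lemma wordLength_one : wordLength S 1 = 0 :=
  Nat.le_zero.mp (wordLength_prod_le (l := []) (by simp))

lemma wordLength_mul_le (hS : Subgroup.closure S = ⊤) (g h : G) :
    wordLength S (g * h) ≤ wordLength S g + wordLength S h := by
  obtain ⟨l, hl, hll, rfl⟩ := exists_list_length_eq_wordLength hS g
  obtain ⟨m, hm, hml, rfl⟩ := exists_list_length_eq_wordLength hS h
  have := wordLength_prod_le (S := S) (l := l ++ m)
    fun x hx => (List.mem_append.mp hx).elim (hl x) (hm x)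
  simpa [hll, hml] using this

lemma wordLength_inv_le (hS : Subgroup.closure S = ⊤) (g : G) :
    wordLength S g⁻¹ ≤ wordLength S g := by
  obtain ⟨l, hl, hll, rfl⟩ := exists_list_length_eq_wordLength hS g
  have := wordLength_prod_le (S := S) (l := (l.map (·⁻¹)).reverse) (by
    simp only [List.mem_reverse, List.mem_map, forall_exists_index, and_imp]
    rintro _ y hy rfl
    simpa [or_comm] using hl y hy)
  rwa [← List.prod_inv_reverse, List.length_reverse, List.length_map, hll] at this

lemma wdist_self (a : G) : wdist S a a = 0 := by
  simp [wdist, wordLength_one]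

lemma wdist_comm (hS : Subgroup.closure S = ⊤) (a b : G) : wdist S a b = wdist S b a :=
  le_antisymm (by simpa [wdist] using wordLength_inv_le hS (b⁻¹ * a))
    (by simpa [wdist] using wordLength_inv_le hS (a⁻¹ * b))

lemma wdist_triangle (hS : Subgroup.closure S = ⊤) (a b c : G) :
    wdist S a c ≤ wdist S a b + wdist S b c := by
  simpa [wdist, mul_assoc] using wordLength_mul_le hS (a⁻¹ * b) (b⁻¹ * c)

lemma wdist_mul_left (z a b : G) : wdist S (z * a) (z * b) = wdist S a b := by
  simp [wdist, mul_assoc]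

lemma finite_setOf_wordLength_le (hS : Subgroup.closure S = ⊤) (hSfin : S.Finite) (r : ℝ) :
    {x : G | (wordLength S x : ℝ) ≤ r}.Finite := by
  have : Finite ↥(S ∪ S⁻¹) := (hSfin.union hSfin.inv).to_subtype
  refine ((List.finite_length_le ↥(S ∪ S⁻¹) ⌈r⌉₊).image
    fun l => (l.map Subtype.val).prod).subset ?_
  intro x hx
  obtain ⟨l, hl, hll, rfl⟩ := exists_list_length_eq_wordLength hS x
  lift l to List ↥(S ∪ S⁻¹) using fun y hy => hl y hy
  refine ⟨l, ?_, rfl⟩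
  have hlen : wordLength S (l.map Subtype.val).prod ≤ ⌈r⌉₊ :=
    Nat.cast_le.mp (hx.trans (Nat.le_ceil r))
  rwa [← hll, List.length_map] at hlen

lemma finite_setOf_wdist_le (hS : Subgroup.closure S = ⊤) (hSfin : S.Finite) (g : G) (r : ℝ) :
    {x : G | (wdist S g x : ℝ) ≤ r}.Finite :=
  ((finite_setOf_wordLength_le hS hSfin r).image (g * ·)).subset
    fun x hx => ⟨g⁻¹ * x, hx, by simp⟩

end WordMetric

section Neighborhoods

variable {S : Set G}

lemma nbhd_mono {r s : ℝ} (h : r ≤ s) (A : Set G) : nbhd S r A ⊆ nbhd S s A :=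
  fun _ ⟨a, ha, hd⟩ => ⟨a, ha, hd.trans h⟩

lemma subset_nbhd_of_hdist_lt {A B : Set G} {M : ℝ≥0} (h : hdist S A B < M) :
    A ⊆ nbhd S M B ∧ B ⊆ nbhd S M A := by
  obtain ⟨r, hr⟩ := iInf_lt_iff.mp h
  obtain ⟨⟨hAB, hBA⟩, hrM⟩ := iInf_lt_iff.mp hr
  have hrM : (r : ℝ) ≤ M := by exact_mod_cast (ENNReal.coe_lt_coe.mp hrM).le
  exact ⟨hAB.trans (nbhd_mono hrM B), hBA.trans (nbhd_mono hrM A)⟩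

lemma mem_nbhd_of_wdist_le (hS : Subgroup.closure S = ⊤) {A : Set G} {x y : G} {s t : ℝ}
    (hx : x ∈ nbhd S s A) (hxy : (wdist S x y : ℝ) ≤ t) : y ∈ nbhd S (s + t) A := by
  obtain ⟨a, ha, hax⟩ := hx
  refine ⟨a, ha, ?_⟩
  calc (wdist S a y : ℝ) ≤ wdist S a x + wdist S x y := by exact_mod_cast wdist_triangle hS a x y
    _ ≤ s + t := add_le_add hax hxy

lemma nbhd_subset_nbhd_of_subset (hS : Subgroup.closure S = ⊤) {A B : Set G} {r s : ℝ}
    (h : A ⊆ nbhd S s B) : nbhd S r A ⊆ nbhd S (s + r) B :=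
  fun _ ⟨_, ha, hd⟩ => mem_nbhd_of_wdist_le hS (h ha) hd

end Neighborhoods

section Cosets

variable {Ps : Finset (Subgroup G)}

lemma nonempty_of_mem_cosets {A : Set G} (hA : A ∈ cosets Ps) : A.Nonempty := by
  obtain ⟨g, P, -, rfl⟩ := hA
  exact ⟨g, 1, P.one_mem, mul_one g⟩

lemma smul_coe_eq_of_mem {P : Subgroup G} {a g : G} (ha : a ∈ g • (P : Set G)) :
    a • (P : Set G) = g • (P : Set G) :=
  (leftCoset_eq_iff P).mpr (by simpa using P.inv_mem ((mem_leftCoset_iff g).mp ha))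

lemma exists_eq_smul_of_mem_cosets {A : Set G} (hA : A ∈ cosets Ps) {a : G} (ha : a ∈ A) :
    ∃ P ∈ Ps, A = a • (P : Set G) := by
  obtain ⟨g, P, hP, rfl⟩ := hA
  exact ⟨P, hP, (smul_coe_eq_of_mem ha).symm⟩

lemma mul_inv_mem_stabilizer {A : Set G} (hA : A ∈ cosets Ps) {a b : G} (ha : a ∈ A)
    (hb : b ∈ A) : a * b⁻¹ ∈ MulAction.stabilizer G A := by
  obtain ⟨P, -, rfl⟩ := exists_eq_smul_of_mem_cosets hA hb
  rw [MulAction.mem_stabilizer_iff, smul_smul, inv_mul_cancel_right, smul_coe_eq_of_mem ha]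

end Cosets

lemma _root_.Set.Infinite.exists_infinite_fiber_of_mapsTo {α β : Type*} {X : Set α} {T : Set β}
    {f : α → β} (hX : X.Infinite) (hf : Set.MapsTo f X T) (hT : T.Finite) :
    ∃ y, (X ∩ f ⁻¹' {y}).Infinite := by
  by_contra! h
  exact hX (Set.Finite.of_finite_fibers f (hT.subset hf.image_subset) fun y _ => h y)

section CoarseIntersection

variable {S : Set G} {Ps : Finset (Subgroup G)} {F : Finset (Set G)}

lemma exists_infinite_iInter_nbhd_of_infinite_iInf_stabilizer (hF : ↑F ⊆ cosets Ps)
    (hI : ((⨅ A ∈ F, MulAction.stabilizer G A : Subgroup G) : Set G).Infinite) :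
    ∃ r : ℝ, (⋂ A ∈ F, nbhd S r A).Infinite := by
  choose! g hg using fun A (hA : A ∈ cosets Ps) => nonempty_of_mem_cosets hA
  refine ⟨(F.sup fun A => wdist S (g A) 1 : ℕ), hI.mono fun z hz => Set.mem_iInter₂.mpr fun A hA => ?_⟩
  simp only [SetLike.mem_coe, Subgroup.mem_iInf] at hz
  refine ⟨z * g A, ?_, ?_⟩
  · simpa [MulAction.mem_stabilizer_iff.mp (hz A hA)] using
      Set.smul_mem_smul_set (a := z) (hg A (hF hA))
  · have hdist : wdist S (z * g A) z = wdist S (g A) 1 := by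
      simpa using wdist_mul_left (S := S) z (g A) 1
    rw [hdist]
    exact_mod_cast Finset.le_sup (f := fun A => wdist S (g A) 1) hA

lemma infinite_iInf_stabilizer_of_infinite_iInter_nbhd (hS : Subgroup.closure S = ⊤)
    (hSfin : S.Finite) (hF : ↑F ⊆ cosets Ps) {r : ℝ} (hX : (⋂ A ∈ F, nbhd S r A).Infinite) :
    ((⨅ A ∈ F, MulAction.stabilizer G A : Subgroup G) : Set G).Infinite := by
  have hmem : ∀ x ∈ ⋂ A ∈ F, nbhd S r A, ∀ A ∈ F, ∃ a ∈ A, (wdist S a x : ℝ) ≤ r :=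
    fun x hx => Set.mem_iInter₂.mp hx
  choose! f hfA hfd using hmem
  obtain ⟨u, hu⟩ := hX.exists_infinite_fiber_of_mapsTo (f := fun x (A : F) => (f x A)⁻¹ * x)
    (T := Set.univ.pi fun _ => {u | (wordLength S u : ℝ) ≤ r})
    (fun x hx => Set.mem_univ_pi.mpr fun A => by simpa [wdist] using hfd x hx A A.2)
    (Set.Finite.pi fun _ => finite_setOf_wordLength_le hS hSfin r)
  obtain ⟨x₀, hx₀⟩ := hu.nonempty
  refine (hu.image (mul_left_injective x₀⁻¹).injOn).mono ?_
  rintro _ ⟨x, hx, rfl⟩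
  simp only [SetLike.mem_coe, Subgroup.mem_iInf]
  intro A hA
  have hxx₀ : (f x A)⁻¹ * x = (f x₀ A)⁻¹ * x₀ :=
    congrFun ((Set.mem_singleton_iff.mp hx.2).trans (Set.mem_singleton_iff.mp hx₀.2).symm) ⟨A, hA⟩
  have hquot : x * x₀⁻¹ = f x A * (f x₀ A)⁻¹ := by
    calc x * x₀⁻¹ = f x A * ((f x A)⁻¹ * x) * x₀⁻¹ := by group
      _ = f x A * (f x₀ A)⁻¹ := by rw [hxx₀]; group
  rw [hquot]
  exact mul_inv_mem_stabilizer (hF hA) (hfA x hx.1 A hA) (hfA x₀ hx₀.1 A hA)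

end CoarseIntersection

lemma exists_card_le_of_meet_ball {S : Set G} (hS : Subgroup.closure S = ⊤) (hSfin : S.Finite)
    (Ps : Finset (Subgroup G)) (D : ℝ) :
    ∃ K : ℕ, ∀ (g : G) (F : Finset (Set G)), ↑F ⊆ cosets Ps →
      (∀ A ∈ F, ∃ a ∈ A, (wdist S a g : ℝ) ≤ D) → F.card ≤ K := by
  classical
  set ball := (finite_setOf_wordLength_le hS hSfin D).toFinset
  refine ⟨(ball ×ˢ Ps).card, fun g F hF hmeet => ?_⟩
  choose! a haA had using hmeet
  choose! P hP hAP using fun A (hA : A ∈ F) => exists_eq_smul_of_mem_cosets (hF hA) (haA A hA)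
  refine Finset.card_le_card_of_injOn (fun A => ((a A)⁻¹ * g, P A)) (fun A hA => ?_)
    (fun A hA A' hA' h => ?_)
  · simpa [ball, hP A hA, wdist] using had A hA
  · simp only [Prod.mk.injEq, mul_left_inj, inv_inj] at h
    rw [hAP A hA, hAP A' hA', h.1, h.2]

theorem exists_card_le_of_image {α β : Type*} [DecidableEq β] {s : Set α} {t : Set β}
    {P : Finset α → Prop} {Q : Finset β → Prop} (φ : α → β) (hφ : Set.MapsTo φ s t) {K : ℕ}
    (hK : ∀ F : Finset α, ↑F ⊆ s → (∀ a ∈ F, ∀ b ∈ F, φ a = φ b) → F.card ≤ K)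
    (hPQ : ∀ F : Finset α, ↑F ⊆ s → P F → Q (F.image φ))
    (h : ∃ n, ∀ F : Finset β, ↑F ⊆ t → Q F → F.card ≤ n) :
    ∃ n, ∀ F : Finset α, ↑F ⊆ s → P F → F.card ≤ n := by
  obtain ⟨n, hn⟩ := h
  refine ⟨K * n, fun F hF hPF => ?_⟩
  have himage : ↑(F.image φ) ⊆ t := by simpa using (hφ.mono_left hF).image_subset
  calc F.card ≤ K * (F.image φ).card :=
        Finset.card_le_mul_card_image F K fun b _ =>
          hK _ (fun a ha => hF (Finset.mem_filter.mp ha).1) fun a ha a' ha' =>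
            (Finset.mem_filter.mp ha).2.trans (Finset.mem_filter.mp ha').2.symm
    _ ≤ K * n := Nat.mul_le_mul_left K (hn _ himage (hPQ F hF hPF))

section Transfer

variable {S : Finset G} {T : Finset H} {Ps : Finset (Subgroup G)} {Qs : Finset (Subgroup H)}

theorem finiteHeight_and_finiteWidth_of_cosetMap (hS : Subgroup.closure (S : Set G) = ⊤)
    (hT : Subgroup.closure (T : Set H) = ⊤) (φ : Set G → Set H)
    (hφ : Set.MapsTo φ (cosets Ps) (cosets Qs)) (D : ℝ)
    (hfib : ∀ A ∈ cosets Ps, ∀ A' ∈ cosets Ps, φ A = φ A' → A ⊆ nbhd S D A')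
    (hinter : ∀ F : Finset (Set G), ↑F ⊆ cosets Ps → ∀ r : ℝ, (⋂ A ∈ F, nbhd S r A).Infinite →
      ∃ r' : ℝ, (⋂ A ∈ F, nbhd T r' (φ A)).Infinite) :
    (HasFiniteHeight Qs → HasFiniteHeight Ps) ∧ (HasFiniteWidth Qs → HasFiniteWidth Ps) := by
  classical
  obtain ⟨K, hK⟩ := exists_card_le_of_meet_ball hS S.finite_toSet Ps D
  have hconst : ∀ F : Finset (Set G), ↑F ⊆ cosets Ps →
      (∀ A ∈ F, ∀ A' ∈ F, φ A = φ A') → F.card ≤ K := by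
    intro F hF hFφ
    rcases F.eq_empty_or_nonempty with rfl | ⟨A₀, hA₀⟩
    · simp
    obtain ⟨g, hg⟩ := nonempty_of_mem_cosets (hF hA₀)
    exact hK g F hF fun A hA => hfib A₀ (hF hA₀) A (hF hA) (hFφ A₀ hA₀ A hA) hg
  have hstab : ∀ F : Finset (Set G), ↑F ⊆ cosets Ps →
      ((⨅ A ∈ F, MulAction.stabilizer G A : Subgroup G) : Set G).Infinite →
      ((⨅ B ∈ F.image φ, MulAction.stabilizer H B : Subgroup H) : Set H).Infinite := by
    intro F hF hI
    obtain ⟨r, hX⟩ := exists_infinite_iInter_nbhd_of_infinite_iInf_stabilizer (S := S) hF hI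
    obtain ⟨r', hY⟩ := hinter F hF r hX
    refine infinite_iInf_stabilizer_of_infinite_iInter_nbhd hT T.finite_toSet
      (by simpa using (hφ.mono_left hF).image_subset) (r := r') ?_
    rwa [Finset.set_biInter_finset_image]
  refine ⟨exists_card_le_of_image φ hφ hconst hstab, exists_card_le_of_image φ hφ hconst ?_⟩
  intro F hF hpair _ hB _ hB' hne
  obtain ⟨A, hA, rfl⟩ := Finset.mem_image.mp hB
  obtain ⟨A', hA', rfl⟩ := Finset.mem_image.mp hB'
  have hAA' : A ≠ A' := fun h => hne (h ▸ rfl)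
  have hpair' := hstab {A, A'} (by simpa [Set.insert_subset_iff] using ⟨hF hA, hF hA'⟩)
    (by simpa [Finset.iInf_insert] using hpair A hA A' hA' hAA')
  simpa [Finset.iInf_insert] using hpair'

end Transfer

namespace IsPairQI

variable {S : Finset G} {T : Finset H} {Ps : Finset (Subgroup G)} {Qs : Finset (Subgroup H)}
  {L C M : ℝ≥0} {q : G → H}

lemma wdist_le (hq : IsPairQI S T Ps Qs L C M q) (a b : G) :
    (wdist (S : Set G) a b : ℝ) ≤ L * (wdist (T : Set H) (q a) (q b) + C) := by
  have hL : (0 : ℝ) < L := lt_of_lt_of_le one_pos (by exact_mod_cast hq.one_le)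
  rw [← div_le_iff₀' hL]
  linarith [hq.lower a b]

lemma mem_nbhd_of_image_mem_nbhd (hq : IsPairQI S T Ps Qs L C M q) {A : Set G} {x : G} {s : ℝ}
    (hx : q x ∈ nbhd (T : Set H) s (q '' A)) : x ∈ nbhd (S : Set G) (L * (s + C)) A := by
  obtain ⟨_, ⟨a, ha, rfl⟩, hd⟩ := hx
  exact ⟨a, ha, (hq.wdist_le a x).trans (by gcongr)⟩

lemma image_nbhd_subset (hq : IsPairQI S T Ps Qs L C M q) (r : ℝ) (A : Set G) :
    q '' nbhd (S : Set G) r A ⊆ nbhd (T : Set H) (L * r + C) (q '' A) := by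
  rintro _ ⟨x, ⟨a, ha, hd⟩, rfl⟩
  exact ⟨q a, ⟨a, ha, rfl⟩, (hq.upper a x).trans (by gcongr)⟩

lemma finite_preimage_singleton (hq : IsPairQI S T Ps Qs L C M q)
    (hS : Subgroup.closure (S : Set G) = ⊤) (y : H) : (q ⁻¹' {y}).Finite := by
  rcases (q ⁻¹' {y}).eq_empty_or_nonempty with h | ⟨x₀, hx₀⟩
  · simp [h]
  refine (finite_setOf_wdist_le hS S.finite_toSet x₀ (L * C)).subset fun x hx => ?_
  have := hq.wdist_le x₀ x
  rwa [Set.mem_singleton_iff.mp hx₀, Set.mem_singleton_iff.mp hx, wdist_self, Nat.cast_zero,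
    zero_add] at this

lemma infinite_image (hq : IsPairQI S T Ps Qs L C M q) (hS : Subgroup.closure (S : Set G) = ⊤)
    {X : Set G} (hX : X.Infinite) : (q '' X).Infinite := fun hfin =>
  hX <| Set.Finite.of_finite_fibers q hfin fun y _ =>
    (hq.finite_preimage_singleton hS y).subset Set.inter_subset_right

lemma exists_coarse_inverse (hq : IsPairQI S T Ps Qs L C M q)
    (hT : Subgroup.closure (T : Set H) = ⊤) :
    ∃ p : H → G, (∀ y, (wdist (T : Set H) (q (p y)) y : ℝ) ≤ C) ∧
      ∀ Y : Set H, Y.Infinite → (p '' Y).Infinite := by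
  choose p hp using hq.dense
  refine ⟨p, hp, fun Y hY hfin => hY <| Set.Finite.of_finite_fibers p hfin fun x _ => ?_⟩
  refine (finite_setOf_wdist_le hT T.finite_toSet (q x) C).subset fun y hy => ?_
  obtain rfl : p y = x := hy.2
  exact hp y

theorem finiteHeight_and_finiteWidth_of_target (hq : IsPairQI S T Ps Qs L C M q)
    (hS : Subgroup.closure (S : Set G) = ⊤) (hT : Subgroup.closure (T : Set H) = ⊤) :
    (HasFiniteHeight Qs → HasFiniteHeight Ps) ∧ (HasFiniteWidth Qs → HasFiniteWidth Ps) := by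
  choose! φ hφ hφM using hq.coset_fwd
  refine finiteHeight_and_finiteWidth_of_cosetMap hS hT φ hφ (L * (M + M + C)) ?_ ?_
  · intro A hA A' hA' hAA' a ha
    have hqa : q a ∈ nbhd (T : Set H) M (φ A') :=
      hAA' ▸ (subset_nbhd_of_hdist_lt (hφM A hA)).1 ⟨a, ha, rfl⟩
    exact hq.mem_nbhd_of_image_mem_nbhd
      (nbhd_subset_nbhd_of_subset hT (subset_nbhd_of_hdist_lt (hφM A' hA')).2 hqa)
  · intro F hF r hX
    refine ⟨M + (L * r + C), (hq.infinite_image hS hX).mono ?_⟩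
    rintro _ ⟨x, hx, rfl⟩
    refine Set.mem_iInter₂.mpr fun A hA => ?_
    exact nbhd_subset_nbhd_of_subset hT (subset_nbhd_of_hdist_lt (hφM A (hF hA))).1
      (hq.image_nbhd_subset r A ⟨x, Set.mem_iInter₂.mp hx A hA, rfl⟩)

theorem finiteHeight_and_finiteWidth_of_source (hq : IsPairQI S T Ps Qs L C M q)
    (hS : Subgroup.closure (S : Set G) = ⊤) (hT : Subgroup.closure (T : Set H) = ⊤) :
    (HasFiniteHeight Ps → HasFiniteHeight Qs) ∧ (HasFiniteWidth Ps → HasFiniteWidth Qs) := by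
  choose! ψ hψ hψM using hq.coset_bwd
  obtain ⟨p, hpq, hp⟩ := hq.exists_coarse_inverse hT
  refine finiteHeight_and_finiteWidth_of_cosetMap hT hS ψ hψ (M + M) ?_ ?_
  · intro B hB B' hB' hBB' b hb
    have hb' : b ∈ nbhd (T : Set H) M (q '' ψ B') := hBB' ▸ (subset_nbhd_of_hdist_lt (hψM B hB)).2 hb
    exact nbhd_subset_nbhd_of_subset hT (subset_nbhd_of_hdist_lt (hψM B' hB')).1 hb'
  · intro F hF r hY
    refine ⟨L * (M + r + C + C), (hp _ hY).mono ?_⟩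
    rintro _ ⟨y, hy, rfl⟩
    refine Set.mem_iInter₂.mpr fun B hB => hq.mem_nbhd_of_image_mem_nbhd ?_
    have hyB : y ∈ nbhd (T : Set H) (M + r) (q '' ψ B) :=
      nbhd_subset_nbhd_of_subset hT (subset_nbhd_of_hdist_lt (hψM B (hF hB))).2
        (Set.mem_iInter₂.mp hy B hB)
    exact mem_nbhd_of_wdist_le hT hyB (by rw [wdist_comm hT]; exact hpq y)

end IsPairQI

/-- Finite height and finite width are quasi-isometry invariants of group pairs. -/
theorem statement12 (S : Finset G) (T : Finset H)
    (Ps : Finset (Subgroup G)) (Qs : Finset (Subgroup H))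
    (hG : IsGroupPair S Ps) (hH : IsGroupPair T Qs)
    (hq : ∃ (L C M : ℝ≥0) (q : G → H), IsPairQI S T Ps Qs L C M q) :
    (HasFiniteHeight Ps ↔ HasFiniteHeight Qs) ∧
    (HasFiniteWidth Ps ↔ HasFiniteWidth Qs) := by
  obtain ⟨L, C, M, q, hq⟩ := hq
  obtain ⟨hheight, hwidth⟩ := hq.finiteHeight_and_finiteWidth_of_source hG.generates hH.generates
  obtain ⟨hheight', hwidth'⟩ :=
    hq.finiteHeight_and_finiteWidth_of_target hG.generates hH.generates
  exact ⟨⟨hheight, hheight'⟩, ⟨hwidth, hwidth'⟩⟩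

end CIC
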